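/- arXiv:math/0011018 — 4 statements merged into one kernel-verified Lean document; each statement's English description precedes it below -/
import Mathlib

section
/- Let k be a field of characteristic p, and F ∈ k[t₀,t₁,t₂] homogeneous of degree d with p | d. Write F = t₀H₀ + t₁H₁ + t₂H₂ and set G₀ = ∂₁H₂ − ∂₂H₁, G₁ = ∂₂H₀ − ∂₀H₂, G₂ = ∂₀H₁ − ∂₁H₀. Then G₀∂₀F + G₁∂₁F + G₂∂₂F = 0; in particular the curve F = 0 is left invariant by the degree d−2 vector field induced by G₀∂₀ + G₁∂₁ + G₂∂₂. -/
open MvPolynomial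

/-! Differentiating `F = ∑ⱼ Xⱼ Hⱼ` gives `∂ᵢF = Hᵢ + ∑ⱼ Xⱼ ∂ⱼHᵢ + ∑ⱼ Xⱼ (∂ᵢHⱼ - ∂ⱼHᵢ)`.
By Euler's identity the first two terms add up to `d Hᵢ`, and the last one is the `i`-th
coordinate of the cross product `X × G`, which is orthogonal to `G`. Hence
`∑ Gᵢ ∂ᵢF = d ∑ Gᵢ Hᵢ`, which vanishes when `p ∣ d`. -/

namespace MvPolynomial

variable {R : Type*} [CommRing R]

noncomputable def curl (H : Fin 3 → MvPolynomial (Fin 3) R) : Fin 3 → MvPolynomial (Fin 3) R :=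
  ![pderiv 1 (H 2) - pderiv 2 (H 1), pderiv 2 (H 0) - pderiv 0 (H 2),
    pderiv 0 (H 1) - pderiv 1 (H 0)]

lemma pderiv_sum_X_mul {σ : Type*} [Fintype σ] (H : σ → MvPolynomial σ R) (i : σ) :
    pderiv i (∑ j, X j * H j) = H i + ∑ j, X j * pderiv i (H j) := by
  classical
  simp only [map_sum, pderiv_mul, pderiv_X, Pi.single_apply, Finset.sum_add_distrib]
  simp [Finset.sum_ite_eq']

lemma sum_curl_mul_pderiv_sum_X_mul (H : Fin 3 → MvPolynomial (Fin 3) R) :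
    ∑ i, curl H i * pderiv i (∑ j, X j * H j) =
      ∑ i, curl H i * (H i + ∑ j, X j * pderiv j (H i)) := by
  simp_rw [pderiv_sum_X_mul]
  simp only [Fin.sum_univ_three, curl, Matrix.cons_val_zero, Matrix.cons_val_one,
    Matrix.cons_val_two, Matrix.head_cons, Matrix.tail_cons]
  ring

lemma sum_curl_mul_pderiv_sum_X_mul_of_isHomogeneous {H : Fin 3 → MvPolynomial (Fin 3) R}
    {n : ℕ} (hH : ∀ i, (H i).IsHomogeneous n) :
    ∑ i, curl H i * pderiv i (∑ j, X j * H j) = (n + 1) • ∑ i, curl H i * H i := by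
  simp only [sum_curl_mul_pderiv_sum_X_mul, (hH _).sum_X_mul_pderiv, Finset.smul_sum]
  refine Finset.sum_congr rfl fun i _ => ?_
  rw [add_smul, one_smul, mul_add, mul_smul_comm, add_comm]

lemma curl_eq_zero_of_isHomogeneous_zero {H : Fin 3 → MvPolynomial (Fin 3) R}
    (hH : ∀ i, (H i).IsHomogeneous 0) : curl H = 0 := by
  have hconst : ∀ i j, pderiv i (H j) = 0 := fun i j => by
    rw [totalDegree_eq_zero_iff_eq_C.mp ((totalDegree_zero_iff_isHomogeneous _).mpr (hH j)),
      pderiv_C]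
  funext i
  fin_cases i <;> simp [curl, hconst]

lemma sum_curl_mul_pderiv_sum_X_mul_eq_zero {H : Fin 3 → MvPolynomial (Fin 3) R} {d : ℕ}
    (hH : ∀ i, (H i).IsHomogeneous (d - 1)) (hd : (d : R) = 0) :
    ∑ i, curl H i * pderiv i (∑ j, X j * H j) = 0 := by
  rcases Nat.eq_zero_or_pos d with rfl | hpos
  -- the truncated `0 - 1 = 0` makes the `Hᵢ` constant here
  · simp [curl_eq_zero_of_isHomogeneous_zero hH]
  · rw [sum_curl_mul_pderiv_sum_X_mul_of_isHomogeneous hH, Nat.sub_add_cancel hpos, nsmul_eq_mul,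
      ← C_eq_coe_nat, hd, map_zero, zero_mul]

end MvPolynomial

/-- Let `k` have characteristic `p` and let `F = t₀H₀ + t₁H₁ + t₂H₂` be homogeneous of
degree `d` with `p ∣ d` (the `Hᵢ` homogeneous of degree `d − 1`).  With
`G₀ = ∂₁H₂ − ∂₂H₁`, `G₁ = ∂₂H₀ − ∂₀H₂`, `G₂ = ∂₀H₁ − ∂₁H₀` one has
`G₀∂₀F + G₁∂₁F + G₂∂₂F = 0`; in particular `∑ Gᵢ∂ᵢF ∈ (F)`, so the curve `{F = 0}` is
left invariant by the degree `d − 2` vector field induced by `G₀∂₀ + G₁∂₁ + G₂∂₂`. -/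
theorem curve_char_p_invariant_field (k : Type*) [Field k] (p : ℕ) [CharP k p]
    (d : ℕ) (hpd : p ∣ d)
    (H : Fin 3 → MvPolynomial (Fin 3) k) (hH : ∀ i, (H i).IsHomogeneous (d - 1))
    (F : MvPolynomial (Fin 3) k)
    (hF : F = X 0 * H 0 + X 1 * H 1 + X 2 * H 2)
    (G : Fin 3 → MvPolynomial (Fin 3) k)
    (hG0 : G 0 = pderiv 1 (H 2) - pderiv 2 (H 1))
    (hG1 : G 1 = pderiv 2 (H 0) - pderiv 0 (H 2))
    (hG2 : G 2 = pderiv 0 (H 1) - pderiv 1 (H 0)) :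
    G 0 * pderiv 0 F + G 1 * pderiv 1 F + G 2 * pderiv 2 F = 0 ∧
      G 0 * pderiv 0 F + G 1 * pderiv 1 F + G 2 * pderiv 2 F ∈ Ideal.span {F} := by
  have hG : G = curl H := by
    funext i
    fin_cases i <;> assumption
  have hF' : F = ∑ j, X j * H j := by rw [hF, Fin.sum_univ_three]
  have tangent : G 0 * pderiv 0 F + G 1 * pderiv 1 F + G 2 * pderiv 2 F = 0 := by
    rw [← Fin.sum_univ_three (fun i => G i * pderiv i F), hG, hF']
    exact sum_curl_mul_pderiv_sum_X_mul_eq_zero hH ((CharP.cast_eq_zero_iff k p d).mpr hpd)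
  exact ⟨tangent, tangent ▸ Ideal.zero_mem _⟩
end

section
/- Let S = k[t₀,…,tₙ] and let I ⊆ S be a homogeneous ideal left invariant by the derivation D = Σ Gᵢ∂ᵢ (i.e. D(I) ⊆ I), with each Gᵢ homogeneous of the same degree. Let S̄ = k[t₀,…,t_q] ⊆ S for some q ≤ n, and set Ī = I ∩ S̄. Suppose there exist B ∈ S and homogeneous Ḡ₀,…,Ḡ_q ∈ S̄ with B·Gᵢ ≡ Ḡᵢ mod I for i = 0,…,q. Then for every F ∈ Ī, Ḡ₀∂₀F + ⋯ + Ḡ_q∂_qF ∈ Ī; that is, the derivation Σ Ḡᵢ∂ᵢ of S̄ leaves Ī invariant. -/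
open MvPolynomial

attribute [local instance] MvPolynomial.gradedAlgebra

lemma pderiv_adjoin_aux (k : Type*) [Field k] (n q : ℕ)
    (F : MvPolynomial (Fin (n + 1)) k)
    (hF : F ∈ Algebra.adjoin k
      {P : MvPolynomial (Fin (n + 1)) k | ∃ i : Fin (n + 1), (i : ℕ) ≤ q ∧ P = X i}) :
    ∀ j : Fin (n + 1),
      (pderiv j F ∈ Algebra.adjoin k
        {P : MvPolynomial (Fin (n + 1)) k | ∃ i : Fin (n + 1), (i : ℕ) ≤ q ∧ P = X i}) ∧
      ((j : ℕ) > q → pderiv j F = 0) := by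
  induction hF using Algebra.adjoin_induction with
  | mem x hx =>
    obtain ⟨i, hi, rfl⟩ := hx
    intro j
    rw [pderiv_X, Pi.single_apply]
    constructor
    · split_ifs with h
      · exact Subalgebra.one_mem _
      · exact Subalgebra.zero_mem _
    · intro hj
      rw [if_neg]
      rintro rfl
      omega
  | algebraMap r =>
    intro j
    simp only [MvPolynomial.algebraMap_eq, pderiv_C]
    exact ⟨Subalgebra.zero_mem _, fun _ => trivial⟩
  | add x y hx hy ihx ihy =>
    intro j
    rw [map_add]
    exact ⟨Subalgebra.add_mem _ (ihx j).1 (ihy j).1,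
      fun h => by rw [(ihx j).2 h, (ihy j).2 h, add_zero]⟩
  | mul x y hx hy ihx ihy =>
    intro j
    rw [pderiv_mul]
    refine ⟨Subalgebra.add_mem _ (Subalgebra.mul_mem _ (ihx j).1 hy)
      (Subalgebra.mul_mem _ hx (ihy j).1), fun h => ?_⟩
    rw [(ihx j).2 h, (ihy j).2 h, zero_mul, mul_zero, add_zero]

/-- **Elimination step for projections.**  Let `S = k[t₀,…,tₙ]`, let `I ⊆ S` be a
homogeneous ideal left invariant by the derivation `D = ∑ Gᵢ∂ᵢ` (the `Gᵢ` homogeneous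
of a common degree `m`), and let `S̄ = k[t₀,…,t_q] ⊆ S` with `Ī = I ∩ S̄`.
Suppose `B ∈ S` and `Ḡ₀,…,Ḡ_q ∈ S̄` are homogeneous (of degree `m + deg B`) with
`B·Gᵢ ≡ Ḡᵢ (mod I)` for `i ≤ q`.  Then for every `F ∈ Ī` we have
`∑_{i ≤ q} Ḡᵢ∂ᵢF ∈ Ī`, i.e. the derivation `∑ Ḡᵢ∂ᵢ` of `S̄` leaves `Ī` invariant. -/
theorem projection_invariant
    (k : Type*) [Field k] (n q : ℕ) (hq : q ≤ n)
    (I : Ideal (MvPolynomial (Fin (n + 1)) k))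
    (hIhom : Ideal.IsHomogeneous
      (homogeneousSubmodule (Fin (n + 1)) k) I)
    (m : ℕ) (G : Fin (n + 1) → MvPolynomial (Fin (n + 1)) k)
    (hGhom : ∀ i, (G i).IsHomogeneous m)
    (hinv : ∀ F ∈ I, ∑ i : Fin (n + 1), G i * pderiv i F ∈ I)
    (b : ℕ) (B : MvPolynomial (Fin (n + 1)) k) (hB : B.IsHomogeneous b)
    (Gbar : Fin (n + 1) → MvPolynomial (Fin (n + 1)) k)
    (hGbar : ∀ i : Fin (n + 1), (i : ℕ) ≤ q →
      Gbar i ∈ Algebra.adjoin k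
        {P : MvPolynomial (Fin (n + 1)) k | ∃ i : Fin (n + 1), (i : ℕ) ≤ q ∧ P = X i})
    (hGbarhom : ∀ i : Fin (n + 1), (i : ℕ) ≤ q → (Gbar i).IsHomogeneous (m + b))
    (hcong : ∀ i : Fin (n + 1), (i : ℕ) ≤ q → B * G i - Gbar i ∈ I) :
    ∀ F ∈ I, F ∈ Algebra.adjoin k
        {P : MvPolynomial (Fin (n + 1)) k | ∃ i : Fin (n + 1), (i : ℕ) ≤ q ∧ P = X i} →
      (∑ i ∈ Finset.univ.filter (fun i : Fin (n + 1) => (i : ℕ) ≤ q),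
          Gbar i * pderiv i F) ∈ I ∧
      (∑ i ∈ Finset.univ.filter (fun i : Fin (n + 1) => (i : ℕ) ≤ q),
          Gbar i * pderiv i F) ∈ Algebra.adjoin k
        {P : MvPolynomial (Fin (n + 1)) k | ∃ i : Fin (n + 1), (i : ℕ) ≤ q ∧ P = X i} := by
  intro F hFI hFbar
  constructor
  · -- ∑_{i≤q} Ḡᵢ∂ᵢF = ∑_{i≤q} (Ḡᵢ - B·Gᵢ)∂ᵢF + B·∑_i Gᵢ∂ᵢF
    have key : (∑ i ∈ Finset.univ.filter (fun i : Fin (n + 1) => (i : ℕ) ≤ q),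
          Gbar i * pderiv i F)
        = (∑ i ∈ Finset.univ.filter (fun i : Fin (n + 1) => (i : ℕ) ≤ q),
            (Gbar i - B * G i) * pderiv i F)
          + B * ∑ i : Fin (n + 1), G i * pderiv i F := by
      rw [Finset.mul_sum]
      rw [show (∑ i : Fin (n + 1), B * (G i * pderiv i F))
          = ∑ i ∈ Finset.univ.filter (fun i : Fin (n + 1) => (i : ℕ) ≤ q),
              B * (G i * pderiv i F) from ?_]
      · rw [← Finset.sum_add_distrib]
        apply Finset.sum_congr rfl
        intro i _
        ring
      · symm
        apply Finset.sum_subset (Finset.filter_subset _ _)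
        intro i _ hi
        simp only [Finset.mem_filter, Finset.mem_univ, true_and, not_le] at hi
        rw [(pderiv_adjoin_aux k n q F hFbar i).2 hi, mul_zero, mul_zero]
    rw [key]
    exact Ideal.add_mem _
      (Ideal.sum_mem _ fun i hi => by
        simp only [Finset.mem_filter, Finset.mem_univ, true_and] at hi
        exact Ideal.mul_mem_right _ _ (neg_mem_iff.mp (by
          simpa using hcong i hi)))
      (Ideal.mul_mem_left _ _ (hinv F hFI))
  · exact Subalgebra.sum_mem _ fun i hi => by
      simp only [Finset.mem_filter, Finset.mem_univ, true_and] at hi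
      exact Subalgebra.mul_mem _ (hGbar i hi) (pderiv_adjoin_aux k n q F hFbar i).1
end

section
/- For each integer d ≥ 3, let C_d ⊆ P³_k be the image of the map P¹ → P³, (t₀:t₁) ↦ (t₀^d : t₀^{d−1}t₁ : t₀t₁^{d−1} : t₁^d), which is cut out by the ideal I = (t₁t₂ − t₀t₃, t₁^{d−1} − t₂t₀^{d−2}, t₂^{d−1} − t₁t₃^{d−2}). Then the derivation D = d·t₀∂₀ + (d−2)t₁∂₁ − (d−2)t₂∂₂ − d·t₃∂₃ satisfies D(F) ∈ I for each of the three listed generators F of I; hence the degree-1 vector field induced by D leaves C_d invariant. -/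
open MvPolynomial

private lemma rc_aux (k : Type*) [Field k] (e : ℕ) :
    ∀ F ∈ ({X 1 * X 2 - X 0 * X 3,
            X 1 ^ (e + 2) - X 2 * X 0 ^ (e + 1),
            X 2 ^ (e + 2) - X 1 * X 3 ^ (e + 1)} : Set (MvPolynomial (Fin 4) k)),
      (C ((e + 3 : ℕ) : k) * X 0 * pderiv 0 F
        + C (((e + 3 : ℕ) : k) - 2) * X 1 * pderiv 1 F
        - C (((e + 3 : ℕ) : k) - 2) * X 2 * pderiv 2 F
        - C ((e + 3 : ℕ) : k) * X 3 * pderiv 3 F) ∈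
      Ideal.span ({X 1 * X 2 - X 0 * X 3,
            X 1 ^ (e + 2) - X 2 * X 0 ^ (e + 1),
            X 2 ^ (e + 2) - X 1 * X 3 ^ (e + 1)} : Set (MvPolynomial (Fin 4) k)) := by
  intro F hF
  have h10 : pderiv 0 (X 1 : MvPolynomial (Fin 4) k) = 0 := pderiv_X_of_ne (by decide)
  have h20 : pderiv 0 (X 2 : MvPolynomial (Fin 4) k) = 0 := pderiv_X_of_ne (by decide)
  have h30 : pderiv 0 (X 3 : MvPolynomial (Fin 4) k) = 0 := pderiv_X_of_ne (by decide)
  have h01 : pderiv 1 (X 0 : MvPolynomial (Fin 4) k) = 0 := pderiv_X_of_ne (by decide)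
  have h21 : pderiv 1 (X 2 : MvPolynomial (Fin 4) k) = 0 := pderiv_X_of_ne (by decide)
  have h31 : pderiv 1 (X 3 : MvPolynomial (Fin 4) k) = 0 := pderiv_X_of_ne (by decide)
  have h02 : pderiv 2 (X 0 : MvPolynomial (Fin 4) k) = 0 := pderiv_X_of_ne (by decide)
  have h12 : pderiv 2 (X 1 : MvPolynomial (Fin 4) k) = 0 := pderiv_X_of_ne (by decide)
  have h32 : pderiv 2 (X 3 : MvPolynomial (Fin 4) k) = 0 := pderiv_X_of_ne (by decide)
  have h03 : pderiv 3 (X 0 : MvPolynomial (Fin 4) k) = 0 := pderiv_X_of_ne (by decide)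
  have h13 : pderiv 3 (X 1 : MvPolynomial (Fin 4) k) = 0 := pderiv_X_of_ne (by decide)
  have h23 : pderiv 3 (X 2 : MvPolynomial (Fin 4) k) = 0 := pderiv_X_of_ne (by decide)
  rcases hF with rfl | rfl | rfl
  · have h : (C ((e + 3 : ℕ) : k) * X 0 * pderiv 0 (X 1 * X 2 - X 0 * X 3)
        + C (((e + 3 : ℕ) : k) - 2) * X 1 * pderiv 1 (X 1 * X 2 - X 0 * X 3)
        - C (((e + 3 : ℕ) : k) - 2) * X 2 * pderiv 2 (X 1 * X 2 - X 0 * X 3)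
        - C ((e + 3 : ℕ) : k) * X 3 * pderiv 3 (X 1 * X 2 - X 0 * X 3)
        : MvPolynomial (Fin 4) k) = 0 := by
      simp only [map_sub, pderiv_mul, pderiv_X_self,
        h10, h20, h30, h01, h21, h31, h02, h12, h32, h03, h13, h23]
      ring
    rw [h]; exact Ideal.zero_mem _
  · have h : (C ((e + 3 : ℕ) : k) * X 0 * pderiv 0 (X 1 ^ (e + 2) - X 2 * X 0 ^ (e + 1))
        + C (((e + 3 : ℕ) : k) - 2) * X 1 * pderiv 1 (X 1 ^ (e + 2) - X 2 * X 0 ^ (e + 1))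
        - C (((e + 3 : ℕ) : k) - 2) * X 2 * pderiv 2 (X 1 ^ (e + 2) - X 2 * X 0 ^ (e + 1))
        - C ((e + 3 : ℕ) : k) * X 3 * pderiv 3 (X 1 ^ (e + 2) - X 2 * X 0 ^ (e + 1))
        : MvPolynomial (Fin 4) k) = C (((e : k) + 2) * ((e : k) + 1)) * (X 1 ^ (e + 2) - X 2 * X 0 ^ (e + 1)) := by
      have e1 : e + 2 - 1 = e + 1 := rfl
      have e2 : e + 1 - 1 = e := rfl
      simp only [map_sub, pderiv_mul, pderiv_pow, pderiv_X_self, e1, e2,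
        h10, h20, h30, h01, h21, h31, h02, h12, h32, h03, h13, h23,
        map_add, map_mul, map_one, map_ofNat, C_eq_coe_nat]
      push_cast
      ring
    rw [h]
    exact Ideal.mul_mem_left _ _ (Ideal.subset_span (by simp))
  · have h : (C ((e + 3 : ℕ) : k) * X 0 * pderiv 0 (X 2 ^ (e + 2) - X 1 * X 3 ^ (e + 1))
        + C (((e + 3 : ℕ) : k) - 2) * X 1 * pderiv 1 (X 2 ^ (e + 2) - X 1 * X 3 ^ (e + 1))
        - C (((e + 3 : ℕ) : k) - 2) * X 2 * pderiv 2 (X 2 ^ (e + 2) - X 1 * X 3 ^ (e + 1))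
        - C ((e + 3 : ℕ) : k) * X 3 * pderiv 3 (X 2 ^ (e + 2) - X 1 * X 3 ^ (e + 1))
        : MvPolynomial (Fin 4) k) = C (-(((e : k) + 2) * ((e : k) + 1))) * (X 2 ^ (e + 2) - X 1 * X 3 ^ (e + 1)) := by
      have e1 : e + 2 - 1 = e + 1 := rfl
      have e2 : e + 1 - 1 = e := rfl
      simp only [map_sub, pderiv_mul, pderiv_pow, pderiv_X_self, e1, e2,
        h10, h20, h30, h01, h21, h31, h02, h12, h32, h03, h13, h23,
        map_add, map_mul, map_one, map_ofNat, map_neg, C_eq_coe_nat]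
      push_cast
      ring
    rw [h]
    exact Ideal.mul_mem_left _ _ (Ideal.subset_span (by simp))

/-- For `d ≥ 3`, let `C_d ⊆ P³_k` be the smooth rational curve of degree `d`, image of
`(t₀:t₁) ↦ (t₀^d : t₀^{d−1}t₁ : t₀t₁^{d−1} : t₁^d)`, cut out by the ideal
`I = (t₁t₂ − t₀t₃, t₁^{d−1} − t₂t₀^{d−2}, t₂^{d−1} − t₁t₃^{d−2})`.  Then the degree-1
derivation `D = d·t₀∂₀ + (d−2)t₁∂₁ − (d−2)t₂∂₂ − d·t₃∂₃` maps each of the three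
generators of `I` into `I`; hence the induced vector field leaves `C_d` invariant. -/
theorem rational_curve_invariant (k : Type*) [Field k] (d : ℕ) (hd : 3 ≤ d) :
    let S := MvPolynomial (Fin 4) k
    let D : S → S := fun F =>
      C (d : k) * X 0 * pderiv 0 F + C ((d : k) - 2) * X 1 * pderiv 1 F
        - C ((d : k) - 2) * X 2 * pderiv 2 F - C (d : k) * X 3 * pderiv 3 F
    let I : Ideal S := Ideal.span
      {X 1 * X 2 - X 0 * X 3,
       X 1 ^ (d - 1) - X 2 * X 0 ^ (d - 2),
       X 2 ^ (d - 1) - X 1 * X 3 ^ (d - 2)}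
    ∀ F ∈ ({X 1 * X 2 - X 0 * X 3,
            X 1 ^ (d - 1) - X 2 * X 0 ^ (d - 2),
            X 2 ^ (d - 1) - X 1 * X 3 ^ (d - 2)} : Set S), D F ∈ I := by
  obtain ⟨e, rfl⟩ : ∃ e, d = e + 3 := ⟨d - 3, by omega⟩
  intro S D I
  exact rc_aux k e
end

section
/- Let k be a field, and for d ≥ 1 let C_d ⊆ Pⁿ_k (n ≥ 4) be the curve cut out by t₂ − d·t₃, t₀t₂^{d−1} − t₁^d, t₄,…,tₙ. Then the derivation D = t₀t₂∂₀ + t₁t₃∂₁ satisfies D(F) ∈ I_d for each generator F of the ideal I_d = (t₂ − d t₃, t₀t₂^{d−1} − t₁^d, t₄,…,tₙ); hence the degree-2 vector field induced by D leaves C_d invariant for every d. -/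
open MvPolynomial

/-- For each `d ≥ 1` let `C_d ⊆ Pⁿ_k` (`n ≥ 4`) be the curve cut out by
`t₂ − d·t₃`, `t₀t₂^{d−1} − t₁^d`, `t₄,…,tₙ`.  Then the degree-2 derivation
`D = t₀t₂∂₀ + t₁t₃∂₁` maps each generator of the ideal `I_d` into `I_d`; hence the
fixed degree-2 vector field induced by `D` leaves every `C_d` invariant. -/
theorem unbounded_degree_invariant_curves (k : Type*) [Field k] [CharZero k]
    (n : ℕ) (hn : 4 ≤ n) (d : ℕ) (hd : 1 ≤ d) :
    let S := MvPolynomial (Fin (n + 1)) k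
    let D : S → S := fun F => X 0 * X 2 * pderiv 0 F + X 1 * X 3 * pderiv 1 F
    let gens : Set S := {X 2 - C (d : k) * X 3, X 0 * X 2 ^ (d - 1) - X 1 ^ d}
      ∪ {F | ∃ i : Fin (n + 1), 4 ≤ (i : ℕ) ∧ F = X i}
    ∀ F ∈ gens, D F ∈ Ideal.span gens := by
  intro S D gens F hF
  have hg1 : (X 2 - C (d : k) * X 3 : S) ∈ Ideal.span gens :=
    Ideal.subset_span (Or.inl (Set.mem_insert _ _))
  have hg2 : (X 0 * X 2 ^ (d - 1) - X 1 ^ d : S) ∈ Ideal.span gens :=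
    Ideal.subset_span (Or.inl (Set.mem_insert_of_mem _ rfl))
  -- values of the small `Fin` literals
  have h0v : ((0 : Fin (n+1)) : ℕ) = 0 := rfl
  have h1v : ((1 : Fin (n+1)) : ℕ) = 1 := by
    have : ((1 : Fin (n+1)) : ℕ) = 1 % (n+1) := rfl
    rw [this, Nat.mod_eq_of_lt (by omega)]
  have h2v : ((2 : Fin (n+1)) : ℕ) = 2 := by
    have : ((2 : Fin (n+1)) : ℕ) = 2 % (n+1) := rfl
    rw [this, Nat.mod_eq_of_lt (by omega)]
  have h3v : ((3 : Fin (n+1)) : ℕ) = 3 := by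
    have : ((3 : Fin (n+1)) : ℕ) = 3 % (n+1) := rfl
    rw [this, Nat.mod_eq_of_lt (by omega)]
  have h01 : (0 : Fin (n+1)) ≠ 1 := Fin.ne_of_val_ne (by omega)
  have h10 : (1 : Fin (n+1)) ≠ 0 := Fin.ne_of_val_ne (by omega)
  have h20 : (2 : Fin (n+1)) ≠ 0 := Fin.ne_of_val_ne (by omega)
  have h30 : (3 : Fin (n+1)) ≠ 0 := Fin.ne_of_val_ne (by omega)
  have h21 : (2 : Fin (n+1)) ≠ 1 := Fin.ne_of_val_ne (by omega)
  have h31 : (3 : Fin (n+1)) ≠ 1 := Fin.ne_of_val_ne (by omega)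
  rcases hF with (rfl | rfl) | ⟨i, hi4, rfl⟩
  · have hz : D (X 2 - C (d : k) * X 3) = 0 := by
      simp [D, pderiv_X_of_ne h20, pderiv_X_of_ne h30, pderiv_X_of_ne h21,
        pderiv_X_of_ne h31]
    rw [hz]; exact Ideal.zero_mem _
  · obtain ⟨e, rfl⟩ : ∃ e, d = e + 1 := ⟨d - 1, (Nat.succ_pred_eq_of_pos hd).symm⟩
    have key : (X 0 * X 2 * pderiv 0 (X 0 * X 2 ^ (e + 1 - 1) - X 1 ^ (e + 1))
          + X 1 * X 3 * pderiv 1 (X 0 * X 2 ^ (e + 1 - 1) - X 1 ^ (e + 1))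
          : MvPolynomial (Fin (n + 1)) k) =
        X 2 * (X 0 * X 2 ^ (e + 1 - 1) - X 1 ^ (e + 1))
          + X 1 ^ (e + 1) * (X 2 - C ((e + 1 : ℕ) : k) * X 3) := by
      simp only [map_sub, pderiv_mul, pderiv_pow, pderiv_X_self,
        pderiv_X_of_ne h20, pderiv_X_of_ne h01, pderiv_X_of_ne h21, pderiv_X_of_ne h10,
        Nat.add_sub_cancel, map_natCast]
      push_cast
      ring
    show (X 0 * X 2 * pderiv 0 (X 0 * X 2 ^ (e + 1 - 1) - X 1 ^ (e + 1))
        + X 1 * X 3 * pderiv 1 (X 0 * X 2 ^ (e + 1 - 1) - X 1 ^ (e + 1))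
        : MvPolynomial (Fin (n + 1)) k) ∈ Ideal.span gens
    rw [key]
    exact add_mem (Ideal.mul_mem_left _ _ hg2) (Ideal.mul_mem_left _ _ hg1)
  · have hi0 : i ≠ (0 : Fin (n+1)) := Fin.ne_of_val_ne (by omega)
    have hi1 : i ≠ (1 : Fin (n+1)) := Fin.ne_of_val_ne (by omega)
    have hz : D (X i) = 0 := by
      simp [D, pderiv_X_of_ne hi0, pderiv_X_of_ne hi1]
    rw [hz]; exact Ideal.zero_mem _
end
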